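/- Let E be a finite set of faults, each fault f equipped with a finite detector set D(f), let S = Δ_{f ∈ E} D(f) be the syndrome, and suppose f₀ ∈ E is peelable with respect to (E, S). Then for every g ∈ E with g ≠ f₀, g is peelable with respect to (E \ {f₀}, S Δ D(f₀)) if and only if g is peelable with respect to (E, S). In particular, peeling a peelable fault never changes the peelability status of any other active fault. -/

import Mathlib

open scoped symmDiff

instance symmDiffComm {X : Type*} [DecidableEq X] :
    Std.Commutative (fun A B : Finset X => A ∆ B) := ⟨symmDiff_comm⟩

instance symmDiffAssoc {X : Type*} [DecidableEq X] :
    Std.Associative (fun A B : Finset X => A ∆ B) := ⟨symmDiff_assoc⟩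

/-- The syndrome of a finite set `E` of faults, each fault `f` having detector
signature `D f`: the iterated symmetric difference `Δ_{f ∈ E} D f`. -/
def syndrome {F X : Type*} [DecidableEq X] (D : F → Finset X) (E : Finset F) :
    Finset X :=
  E.fold (fun A B : Finset X => A ∆ B) ∅ D

/-- A fault `f` is peelable with respect to active set `E` and syndrome `S` if its
complete detector signature is active (`D f ⊆ S`) and no other active fault shares
any of its detectors. -/
def Peelable {F X : Type*} [DecidableEq X] (D : F → Finset X) (E : Finset F)
    (S : Finset X) (f : F) : Prop :=
  D f ⊆ S ∧ ∀ g ∈ E, g ≠ f → D f ∩ D g = ∅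

theorem Disjoint.le_symmDiff_iff {α : Type*} [GeneralizedBooleanAlgebra α] {a b c : α}
    (h : Disjoint a c) : a ≤ b ∆ c ↔ a ≤ b :=
  calc a ≤ b ∆ c ↔ a ≤ b ∆ c \ c := by rw [le_sdiff, and_iff_left h]
    _ ↔ a ≤ b \ c := by rw [symmDiff_sdiff_right]
    _ ↔ a ≤ b := by rw [le_sdiff, and_iff_left h]

section Peelable

variable {F X : Type*} [DecidableEq X] {D : F → Finset X} {E : Finset F} {S : Finset X}
  {f f₀ : F}

theorem peelable_symmDiff_iff (h : Disjoint (D f) (D f₀)) :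
    Peelable D E (S ∆ D f₀) f ↔ Peelable D E S f :=
  and_congr_left' h.le_symmDiff_iff

theorem peelable_erase_iff [DecidableEq F] (h : D f ∩ D f₀ = ∅) :
    Peelable D (E.erase f₀) S f ↔ Peelable D E S f := by
  refine and_congr_right' ⟨fun hdisj g hg hgf => ?_,
    fun hdisj g hg => hdisj g (Finset.mem_of_mem_erase hg)⟩
  by_cases hgf₀ : g = f₀
  · exact hgf₀ ▸ h
  · exact hdisj g (Finset.mem_erase.mpr ⟨hgf₀, hg⟩) hgf

end Peelable

theorem peeling_preserves_peelability_general {F X : Type*} [DecidableEq F] [DecidableEq X]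
    (D : F → Finset X) (E : Finset F) (S : Finset X)
    (f₀ : F) (hpeel : Peelable D E S f₀) :
    ∀ g ∈ E, g ≠ f₀ →
      (Peelable D (E.erase f₀) (S ∆ D f₀) g ↔ Peelable D E S g) := by
  intro g hg hgf
  have hdisj : D g ∩ D f₀ = ∅ := by rw [Finset.inter_comm]; exact hpeel.2 g hg hgf
  rw [peelable_erase_iff hdisj,
    peelable_symmDiff_iff (Finset.disjoint_iff_inter_eq_empty.mpr hdisj)]

/-- Cascade unblock rate `κ = 0`: if `f₀ ∈ E` is peelable with respect to
`(E, S)` where `S` is the syndrome of `E`, then peeling `f₀` (removing it from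
`E` and updating the syndrome to `S ∆ D f₀`) leaves the peelability status of
every other active fault unchanged. -/
theorem peeling_preserves_peelability {F X : Type*} [DecidableEq F] [DecidableEq X]
    (D : F → Finset X) (E : Finset F) (S : Finset X) (hS : S = syndrome D E)
    (f₀ : F) (hf₀ : f₀ ∈ E) (hpeel : Peelable D E S f₀) :
    ∀ g ∈ E, g ≠ f₀ →
      (Peelable D (E.erase f₀) (S ∆ D f₀) g ↔ Peelable D E S g) :=
  peeling_preserves_peelability_general D E S f₀ hpeel
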